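/- arXiv:1307.6393 — 2 statements merged into one kernel-verified Lean document; each statement's English description precedes it below -/
import Mathlib

section
/- Let u be a strongly degenerate diffusion coefficient on [0,L]. Then for all pairs (y,z) ∈ H_u^2(0,L) × H_u^1(0,L) one has the integration-by-parts formula ∫_0^L (u y_x)_x z dx = − ∫_0^L u y_x z_x dx. -/
open MeasureTheory Set Filter

noncomputable section

/-- `g ∈ L²(0,L)`. -/
def MemL2I (L : ℝ) (g : ℝ → ℝ) : Prop :=
  MemLp g 2 (volume.restrict (Ioo 0 L))

/-- `y` is absolutely continuous on `[a,b]` (with derivative `deriv y`). -/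
def ACon (a b : ℝ) (y : ℝ → ℝ) : Prop :=
  IntegrableOn (deriv y) (Icc a b) ∧
  ∀ x ∈ Icc a b, y x = y a + ∫ t in a..x, deriv y t

/-- `y` is locally absolutely continuous on `[0,L] \ {x₀}`. -/
def LocAC (L x₀ : ℝ) (y : ℝ → ℝ) : Prop :=
  ∀ a b : ℝ, a ≤ b → Icc a b ⊆ Icc 0 L \ {x₀} → ACon a b y

/-- `u ∈ W^{1,∞}(0,L)`, i.e. `u` is Lipschitz on `[0,L]`. -/
def MemW1inf (L : ℝ) (u : ℝ → ℝ) : Prop :=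
  ∃ C : NNReal, LipschitzOnWith C u (Icc 0 L)

/-- `u` is a strongly degenerate diffusion coefficient on `[0,L]`. -/
structure StrongDeg (L x₀ : ℝ) (u : ℝ → ℝ) : Prop where
  mem : x₀ ∈ Ioo 0 L
  lip : MemW1inf L u
  zero : u x₀ = 0
  pos : ∀ x ∈ Icc 0 L, x ≠ x₀ → 0 < u x
  oneDivNotInt : ¬ IntegrableOn (fun x => 1 / u x) (Ioo 0 L)

/-- membership in the weighted space `H_u^1(0,L)` (Dirichlet at both ends). -/
def MemH1u (L x₀ : ℝ) (u y : ℝ → ℝ) : Prop :=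
  MemL2I L y ∧ LocAC L x₀ y ∧
  MemL2I L (fun x => Real.sqrt (u x) * deriv y x) ∧ y 0 = 0 ∧ y L = 0

/-- membership in the weighted space `Ĥ_u^1(0,L)` (Dirichlet at `0` only). -/
def MemH1uMixed (L x₀ : ℝ) (u y : ℝ → ℝ) : Prop :=
  MemL2I L y ∧ LocAC L x₀ y ∧
  MemL2I L (fun x => Real.sqrt (u x) * deriv y x) ∧ y 0 = 0

/-- membership in the standard space `H₀¹(0,L)`. -/
def MemH01 (L : ℝ) (y : ℝ → ℝ) : Prop :=
  MemL2I L y ∧ ACon 0 L y ∧ MemL2I L (deriv y) ∧ y 0 = 0 ∧ y L = 0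

/-- the squared norm of `H_u^1(0,L)`: `‖y‖² = ‖y‖_{L²}² + ‖√u y_x‖_{L²}²`. -/
def H1normSq (L : ℝ) (u y : ℝ → ℝ) : ℝ :=
  (∫ x in Ioo 0 L, (y x) ^ 2) + ∫ x in Ioo 0 L, u x * (deriv y x) ^ 2

/-- membership in `H_u^2(0,L) = {y ∈ H_u^1 : u y_x ∈ H¹(0,L)}`. -/
def MemH2u (L x₀ : ℝ) (u y : ℝ → ℝ) : Prop :=
  MemH1u L x₀ u y ∧
  MemL2I L (fun x => u x * deriv y x) ∧
  MemL2I L (deriv (fun x => u x * deriv y x)) ∧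
  ACon 0 L (fun x => u x * deriv y x)

/-- squared dual norm of a functional `F` on the space `{ψ : V ψ}` with the
`H_u^1`-type norm of weight `a`. -/
def dualNormSq (L : ℝ) (V : (ℝ → ℝ) → Prop) (a : ℝ → ℝ) (F : (ℝ → ℝ) → ℝ) : ℝ :=
  sSup {c : ℝ | ∃ ψ : ℝ → ℝ, V ψ ∧ H1normSq L a ψ ≤ 1 ∧ c = (F ψ) ^ 2}

/-- the dual-space-valued source associated with a function `f ∈ L²(Q)`. -/
def Ffun (L : ℝ) (f : ℝ → ℝ → ℝ) : ℝ → (ℝ → ℝ) → ℝ :=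
  fun t ψ => ∫ x in Ioo 0 L, f t x * ψ x

/-- `y`, with distributional time derivative `yt` (a family of functionals on the
test space `{ψ : V ψ}`), is a weak (variational) solution of
`y_t - (a y_x)_x = F`, `y(0,⋅) = y₀`, with the boundary conditions encoded in `V`:
`y ∈ C([0,T];L²) ∩ L²(0,T;V) ∩ W^{1,2}([0,T];V')` and the variational identity holds. -/
structure IsWeakSol (T L : ℝ) (V : (ℝ → ℝ) → Prop) (a : ℝ → ℝ)
    (F : ℝ → (ℝ → ℝ) → ℝ) (y₀ : ℝ → ℝ) (y : ℝ → ℝ → ℝ)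
    (yt : ℝ → (ℝ → ℝ) → ℝ) : Prop where
  init : ∀ᵐ x ∂(volume.restrict (Ioo 0 L)), y 0 x = y₀ x
  memL2 : ∀ t ∈ Icc 0 T, MemL2I L (y t)
  contL2 : ∀ t₀ ∈ Icc 0 T,
    Tendsto (fun t => ∫ x in Ioo 0 L, (y t x - y t₀ x) ^ 2)
      (nhdsWithin t₀ (Icc 0 T)) (nhds 0)
  memV : ∀ᵐ t ∂(volume.restrict (Ioo 0 T)), V (y t)
  normInt : IntegrableOn (fun t => H1normSq L a (y t)) (Ioo 0 T)
  ytLin : ∀ t : ℝ, ∀ ψ φ : ℝ → ℝ, ∀ c : ℝ,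
    yt t (fun x => ψ x + c * φ x) = yt t ψ + c * yt t φ
  ytDualInt : IntegrableOn (fun t => dualNormSq L V a (yt t)) (Ioo 0 T)
  prim : ∀ ψ : ℝ → ℝ, V ψ → ∀ t ∈ Icc 0 T,
    (∫ x in Ioo 0 L, y t x * ψ x)
      = (∫ x in Ioo 0 L, y₀ x * ψ x) + ∫ s in Ioo 0 t, yt s ψ
  eqn : ∀ ψ : ℝ → ℝ, V ψ → ∀ᵐ t ∂(volume.restrict (Ioo 0 T)),
    yt t ψ + (∫ x in Ioo 0 L, a x * deriv (y t) x * deriv ψ x) = F t ψ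

/-- the standing hypotheses on the data `x₀, u_∞, u_m, u_M, α, u₀, u_L`
defining the admissible class `U`. -/
structure AdmissibleSetup (L x₀ uinf : ℝ) (um uM alf : ℝ → ℝ) (u0 uL : ℝ) : Prop where
  hL : 0 < L
  hx : x₀ ∈ Ioo 0 L
  hinf : 0 ≤ uinf
  cum : ContinuousOn um (Icc 0 L)
  cuM : ContinuousOn uM (Icc 0 L)
  calf : ContinuousOn alf (Icc 0 L)
  half1 : ∀ x ∈ Icc 0 L, 1 ≤ alf x
  hcomp : ∀ x ∈ Icc 0 L, uM x ≤ alf x * um x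
  horder : ∀ x ∈ Icc 0 L, x ≠ x₀ → 0 < um x ∧ um x < uM x
  hzm : um x₀ = 0
  hzM : uM x₀ = 0
  hdiv : ¬ IntegrableOn (fun x => 1 / uM x) (Ioo 0 L)
  hu0 : um 0 ≤ u0 ∧ u0 ≤ uM 0
  huL : um L ≤ uL ∧ uL ≤ uM L

/-- membership in the admissible class
`U = {u ∈ W^{1,∞} : u_m ≤ u ≤ u_M, u(0)=u₀, u(L)=u_L, |u_x| ≤ u_∞ a.e.}`. -/
def MemU (L uinf : ℝ) (um uM : ℝ → ℝ) (u0 uL : ℝ) (u : ℝ → ℝ) : Prop :=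
  LipschitzOnWith (Real.toNNReal uinf) u (Icc 0 L) ∧
  (∀ x ∈ Icc 0 L, um x ≤ u x ∧ u x ≤ uM x) ∧ u 0 = u0 ∧ u L = uL

/-- membership in the approximating admissible class
`U_ε = {u ∈ W^{1,∞} : u_m+ε ≤ u ≤ u_M+2ε, u(0)=u₀^ε, u(L)=u_L^ε, |u_x| ≤ u_∞ a.e.}`. -/
def MemUeps (L uinf eps : ℝ) (um uM : ℝ → ℝ) (u0e uLe : ℝ) (u : ℝ → ℝ) : Prop :=
  LipschitzOnWith (Real.toNNReal uinf) u (Icc 0 L) ∧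
  (∀ x ∈ Icc 0 L, um x + eps ≤ u x ∧ u x ≤ uM x + 2 * eps) ∧ u 0 = u0e ∧ u L = uLe

/-- sup norm of `g` on `[0,L]`. -/
def supOn (L : ℝ) (g : ℝ → ℝ) : ℝ :=
  sSup ((fun x => |g x|) '' Icc 0 L)

/-- the cost functional `J`. -/
def costJ (T L lam1 lam2 lam3 Mf MT M : ℝ) (u : ℝ → ℝ) (y : ℝ → ℝ → ℝ) : ℝ :=
  lam1 / 2 * ((∫ t in Ioo 0 T, ∫ x in Ioo 0 L, u x * deriv (y t) x) - Mf) ^ 2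
  + lam2 / 2 * ((∫ x in Ioo 0 L, y T x) - MT) ^ 2
  + lam3 / 2 * ((∫ t in Ioo 0 T, ∫ x in Ioo 0 L, y t x) - M) ^ 2

/-- `(ustar, ystar)` (with time-derivative functional `ytstar`) is a solution of the
minimization problem `(P)` (homogeneous Dirichlet b.c.). -/
def SolvesP (T L x₀ uinf : ℝ) (um uM : ℝ → ℝ) (u0 uL lam1 lam2 lam3 Mf MT M : ℝ)
    (f : ℝ → ℝ → ℝ) (y₀ : ℝ → ℝ) (ustar : ℝ → ℝ) (ystar : ℝ → ℝ → ℝ)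
    (ytstar : ℝ → (ℝ → ℝ) → ℝ) : Prop :=
  MemU L uinf um uM u0 uL ustar ∧
  IsWeakSol T L (MemH1u L x₀ ustar) ustar (Ffun L f) y₀ ystar ytstar ∧
  ∀ (u : ℝ → ℝ) (y : ℝ → ℝ → ℝ) (yt : ℝ → (ℝ → ℝ) → ℝ),
    MemU L uinf um uM u0 uL u →
    IsWeakSol T L (MemH1u L x₀ u) u (Ffun L f) y₀ y yt →
    costJ T L lam1 lam2 lam3 Mf MT M ustar ystar ≤ costJ T L lam1 lam2 lam3 Mf MT M u y

/-- `(ustar, ystar)` is a solution of the approximating problem `(P_ε)`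
(nondegenerate state system). -/
def SolvesPeps (T L uinf eps : ℝ) (um uM : ℝ → ℝ) (u0e uLe lam1 lam2 lam3 Mf MT M : ℝ)
    (f : ℝ → ℝ → ℝ) (y₀ : ℝ → ℝ) (ustar : ℝ → ℝ) (ystar : ℝ → ℝ → ℝ)
    (ytstar : ℝ → (ℝ → ℝ) → ℝ) : Prop :=
  MemUeps L uinf eps um uM u0e uLe ustar ∧
  IsWeakSol T L (MemH01 L) ustar (Ffun L f) y₀ ystar ytstar ∧
  ∀ (u : ℝ → ℝ) (y : ℝ → ℝ → ℝ) (yt : ℝ → (ℝ → ℝ) → ℝ),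
    MemUeps L uinf eps um uM u0e uLe u →
    IsWeakSol T L (MemH01 L) u (Ffun L f) y₀ y yt →
    costJ T L lam1 lam2 lam3 Mf MT M ustar ystar ≤ costJ T L lam1 lam2 lam3 Mf MT M u y

/-- `(ustar, ystar)` is a solution of the final-time minimization problem `(P₁)`
(mixed Dirichlet–Neumann b.c.). -/
def SolvesP1 (T L x₀ uinf : ℝ) (um uM : ℝ → ℝ) (u0 uL : ℝ)
    (f : ℝ → ℝ → ℝ) (y₀ : ℝ → ℝ) (ustar : ℝ → ℝ) (ystar : ℝ → ℝ → ℝ)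
    (ytstar : ℝ → (ℝ → ℝ) → ℝ) : Prop :=
  MemU L uinf um uM u0 uL ustar ∧
  IsWeakSol T L (MemH1uMixed L x₀ ustar) ustar (Ffun L f) y₀ ystar ytstar ∧
  ∀ (u : ℝ → ℝ) (y : ℝ → ℝ → ℝ) (yt : ℝ → (ℝ → ℝ) → ℝ),
    MemU L uinf um uM u0 uL u →
    IsWeakSol T L (MemH1uMixed L x₀ u) u (Ffun L f) y₀ y yt →
    (∫ x in Ioo 0 L, ystar T x) ≤ ∫ x in Ioo 0 L, y T x

/-- `p` is a (strong) solution of the backward dual system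
`p_t + (a p_x)_x = c` in `Q`, `p(T,⋅) = pT`, with boundary conditions / regularity
encoded through `V` (a.e. `t`, `p(t) ∈ V` and `(t ↦ p(t))` is `V`-norm continuous),
an extra regularity predicate `V₂` holding a.e. in `t`,
`(a p_x)_x ∈ L²(Q)` and `p_t = g ∈ L²(Q)`. -/
def IsDualSol (T L : ℝ) (V V2 : (ℝ → ℝ) → Prop) (a : ℝ → ℝ) (c pT : ℝ)
    (p : ℝ → ℝ → ℝ) : Prop :=
  (∀ t ∈ Icc 0 T, V (p t)) ∧
  (∀ t₀ ∈ Icc 0 T,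
    Tendsto (fun t => H1normSq L a (fun x => p t x - p t₀ x))
      (nhdsWithin t₀ (Icc 0 T)) (nhds 0)) ∧
  (∀ᵐ t ∂(volume.restrict (Ioo 0 T)), V2 (p t)) ∧
  (∀ᵐ x ∂(volume.restrict (Ioo 0 L)), p T x = pT) ∧
  IntegrableOn
    (fun t => ∫ x in Ioo 0 L, (deriv (fun s => a s * deriv (p t) s) x) ^ 2) (Ioo 0 T) ∧
  ∃ g : ℝ → ℝ → ℝ,
    (∀ t ∈ Icc 0 T, ∀ᵐ x ∂(volume.restrict (Ioo 0 L)),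
      p t x = p 0 x + ∫ s in (0:ℝ)..t, g s x) ∧
    IntegrableOn (fun t => ∫ x in Ioo 0 L, (g t x) ^ 2) (Ioo 0 T) ∧
    ∀ᵐ t ∂(volume.restrict (Ioo 0 T)), ∀ᵐ x ∂(volume.restrict (Ioo 0 L)),
      g t x + deriv (fun s => a s * deriv (p t) s) x = c

end


/-!
Write `w = u y_x`. The formula is the product rule `∫₀ᴸ (w z)' = [w z]₀ᴸ`, but `z` is absolutely
continuous only away from the degeneracy point `x₀`, so one integrates by parts on `[0, a]` and
`[b, L]` and lets `a ↑ x₀`, `b ↓ x₀`. The boundary terms `w z` at `a` and `b` need not converge;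
however `w (x₀) = 0` and `w' ∈ L²` give `w x ^ 2 ≤ ‖w'‖² |x - x₀|` by Cauchy–Schwarz, so if
`|w z| ≥ ε` on one side of `x₀`, then `z² ≥ ε² / (‖w'‖² |x - x₀|)` there, contradicting `z ∈ L²`.
Hence `w z` takes arbitrarily small values on both sides of `x₀`, which suffices because the
primitive of `w' z + w z'` is continuous.
-/

lemma sq_intervalIntegral_le {f : ℝ → ℝ} {a b : ℝ} (hf : IntervalIntegrable f volume a b)
    (hf2 : IntervalIntegrable (fun x => f x ^ 2) volume a b) :
    (∫ x in a..b, f x) ^ 2 ≤ |b - a| * ∫ x in uIoc a b, f x ^ 2 := by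
  rcases eq_or_ne a b with rfl | hab
  · simp
  have hvol : volume.real (uIoc a b) = |b - a| := by
    simp [measureReal_def, Real.volume_uIoc]
  have jensen := (even_two.convexOn_pow (𝕜 := ℝ)).map_set_average_le
    (continuous_pow 2).continuousOn isClosed_univ
    (by simp [Real.volume_uIoc, hab.symm, sub_eq_zero]) (by simp [Real.volume_uIoc])
    (by simp) (intervalIntegrable_iff.mp hf) (intervalIntegrable_iff.mp hf2)
  simp only [setAverage_eq, hvol, smul_eq_mul] at jensen
  rw [← sq_abs, intervalIntegral.abs_integral_eq_abs_integral_uIoc, sq_abs]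
  calc (∫ x in uIoc a b, f x) ^ 2 = |b - a| ^ 2 * (|b - a|⁻¹ * ∫ x in uIoc a b, f x) ^ 2 := by
        field_simp
    _ ≤ |b - a| ^ 2 * (|b - a|⁻¹ * ∫ x in uIoc a b, f x ^ 2) :=
        mul_le_mul_of_nonneg_left jensen (sq_nonneg _)
    _ = |b - a| * ∫ x in uIoc a b, f x ^ 2 := by field_simp

lemma AbsolutelyContinuousOnInterval.congr {f g : ℝ → ℝ} {a b : ℝ}
    (hf : AbsolutelyContinuousOnInterval f a b) (hfg : EqOn f g (uIcc a b)) :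
    AbsolutelyContinuousOnInterval g a b := by
  refine hf.congr' ?_
  filter_upwards [eventually_inf_principal.mpr (Eventually.of_forall fun E hE => hE)] with E hE
  exact Finset.sum_congr rfl fun i hi => by rw [hfg (hE.1 i hi).1, hfg (hE.1 i hi).2]

namespace ACon

variable {a b : ℝ} {f : ℝ → ℝ}

lemma intervalIntegrable_deriv (hf : ACon a b f) (hab : a ≤ b) :
    IntervalIntegrable (deriv f) volume a b :=
  (intervalIntegrable_iff_integrableOn_Icc_of_le hab).mpr hf.1

lemma integral_deriv_eq_sub {c x : ℝ} (hf : ACon a b f) (hc : c ∈ Icc a b) (hx : x ∈ Icc a b) :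
    ∫ t in c..x, deriv f t = f x - f c := by
  have hint := hf.intervalIntegrable_deriv (hc.1.trans hc.2)
  have hsplit := intervalIntegral.integral_interval_sub_left
    (hint.mono_set (uIcc_subset_uIcc_left (Icc_subset_uIcc hx)))
    (hint.mono_set (uIcc_subset_uIcc_left (Icc_subset_uIcc hc)))
  linarith [hf.2 x hx, hf.2 c hc]

lemma mono {c d : ℝ} (hf : ACon a b f) (hac : a ≤ c) (hcd : c ≤ d) (hdb : d ≤ b) :
    ACon c d f :=
  ⟨hf.1.mono_set (Icc_subset_Icc hac hdb), fun x hx => by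
    rw [hf.integral_deriv_eq_sub ⟨hac, hcd.trans hdb⟩ ⟨hac.trans hx.1, hx.2.trans hdb⟩]
    ring⟩

lemma absolutelyContinuousOnInterval (hf : ACon a b f) (hab : a ≤ b) :
    AbsolutelyContinuousOnInterval f a b := by
  have hprim := (hf.intervalIntegrable_deriv hab).absolutelyContinuousOnInterval_intervalIntegral
    (c := a) left_mem_uIcc
  refine ((LipschitzWith.const (f a)).lipschitzOnWith.absolutelyContinuousOnInterval.fun_add
    hprim).congr fun x hx => ?_
  rw [uIcc_of_le hab] at hx
  exact (hf.2 x hx).symm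

lemma integral_deriv_mul_add_eq_sub {g : ℝ → ℝ} (hf : ACon a b f) (hg : ACon a b g)
    (hab : a ≤ b) :
    ∫ x in a..b, deriv f x * g x + f x * deriv g x = f b * g b - f a * g a :=
  (hf.absolutelyContinuousOnInterval hab).integral_deriv_mul_eq_sub
    (hg.absolutelyContinuousOnInterval hab)

lemma sq_le_integral_sq_mul {c x : ℝ} (hf : ACon a b f)
    (hf2 : IntegrableOn (fun t => deriv f t ^ 2) (Icc a b)) (hc : c ∈ Icc a b) (hfc : f c = 0)
    (hx : x ∈ Icc a b) :
    f x ^ 2 ≤ (∫ t in Icc a b, deriv f t ^ 2) * |x - c| := by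
  have hsub : uIcc c x ⊆ Icc a b := uIcc_subset_Icc hc hx
  calc f x ^ 2 = (∫ t in c..x, deriv f t) ^ 2 := by
        rw [hf.integral_deriv_eq_sub hc hx, hfc, sub_zero]
    _ ≤ |x - c| * ∫ t in uIoc c x, deriv f t ^ 2 :=
        sq_intervalIntegral_le (hf.1.mono_set hsub).intervalIntegrable
          (hf2.mono_set hsub).intervalIntegrable
    _ ≤ |x - c| * ∫ t in Icc a b, deriv f t ^ 2 := by
        refine mul_le_mul_of_nonneg_left (setIntegral_mono_set hf2 ?_ ?_) (abs_nonneg _)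
        · exact Eventually.of_forall fun _ => sq_nonneg _
        · exact (uIoc_subset_uIcc.trans hsub).eventuallyLE
    _ = _ := mul_comm _ _

end ACon

lemma LocAC.acon {L x₀ a b : ℝ} {f : ℝ → ℝ} (hf : LocAC L x₀ f) (h0a : 0 ≤ a) (hab : a ≤ b)
    (hbL : b ≤ L) (hx₀ : x₀ ∉ Icc a b) : ACon a b f :=
  hf a b hab fun _ ht => ⟨⟨h0a.trans ht.1, ht.2.trans hbL⟩, fun h => hx₀ (h ▸ ht)⟩

lemma exists_abs_mul_lt_of_sq_le {w z : ℝ → ℝ} {A ε x₀ p q : ℝ} (hpq : p < q)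
    (hx₀ : x₀ ∈ Icc p q) (hε : 0 < ε) (hw : ∀ x ∈ Ioo p q, w x ^ 2 ≤ A * |x - x₀|)
    (hz : IntegrableOn (fun x => z x ^ 2) (Ioo p q)) :
    ∃ x ∈ Ioo p q, |w x * z x| < ε := by
  by_contra! hbig
  have hlow : ∀ x ∈ Ioo p q, ε ^ 2 ≤ A * |x - x₀| * z x ^ 2 := fun x hx =>
    calc ε ^ 2 ≤ |w x * z x| ^ 2 := pow_le_pow_left₀ hε.le (hbig x hx) 2
      _ = w x ^ 2 * z x ^ 2 := by rw [sq_abs, mul_pow]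
      _ ≤ A * |x - x₀| * z x ^ 2 := mul_le_mul_of_nonneg_right (hw x hx) (sq_nonneg _)
  have hA : 0 < A := by
    obtain ⟨x, hx⟩ := nonempty_Ioo.mpr hpq
    by_contra! hA
    nlinarith [hlow x hx, mul_nonpos_of_nonpos_of_nonneg hA
      (mul_nonneg (abs_nonneg (x - x₀)) (sq_nonneg (z x)))]
  have hinv : IntegrableOn (fun x => (x - x₀)⁻¹) (Ioo p q) := by
    refine (hz.const_mul (A / ε ^ 2)).mono' (by fun_prop) ?_
    filter_upwards [ae_restrict_mem measurableSet_Ioo] with x hx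
    rw [norm_inv, Real.norm_eq_abs, div_mul_eq_mul_div, le_div_iff₀ (by positivity)]
    rcases eq_or_ne x x₀ with rfl | hne
    · simp only [sub_self, abs_zero, inv_zero, zero_mul]
      positivity
    · rw [inv_mul_le_iff₀ (abs_pos.mpr (sub_ne_zero.mpr hne))]
      linarith [hlow x hx]
  have := (intervalIntegrable_iff_integrableOn_Ioo_of_le hpq.le).mpr hinv
  rw [intervalIntegrable_sub_inv_iff, uIcc_of_le hpq.le] at this
  exact this.elim hpq.ne (· hx₀)

lemma eq_of_tendsto_of_frequently_abs_sub_lt {α : Type*} {l : Filter α} {F : α → ℝ} {c d : ℝ}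
    (hF : Tendsto F l (nhds c)) (h : ∀ ε > 0, ∃ᶠ x in l, |F x - d| < ε) : c = d := by
  by_contra hcd
  have hε : 0 < |c - d| / 2 := by simpa [sub_eq_zero] using hcd
  obtain ⟨x, hxd, hxc⟩ := ((h _ hε).and_eventually (Metric.tendsto_nhds.mp hF _ hε)).exists
  rw [Real.dist_eq] at hxc
  linarith [abs_sub_le c (F x) d, abs_sub_comm (F x) c]

lemma ContinuousWithinAt.eq_of_eqOn_add_mul {F w z : ℝ → ℝ} {A d x₀ p q : ℝ} (hpq : p < q)
    (hx₀ : x₀ ∈ Icc p q) (hF : ContinuousWithinAt F (Ioo p q) x₀)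
    (hFwz : ∀ x ∈ Ioo p q, F x = d + w x * z x) (hw : ∀ x ∈ Ioo p q, w x ^ 2 ≤ A * |x - x₀|)
    (hz : IntegrableOn (fun x => z x ^ 2) (Ioo p q)) :
    F x₀ = d := by
  refine eq_of_tendsto_of_frequently_abs_sub_lt hF fun ε hε => ?_
  have hsmall : ∃ᶠ x in nhdsWithin x₀ (Ioo p q), |w x * z x| < ε := by
    rw [Metric.nhdsWithin_basis_ball.frequently_iff]
    intro δ hδ
    have hsub : Ioo (max p (x₀ - δ)) (min q (x₀ + δ)) ⊆ Ioo p q :=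
      Ioo_subset_Ioo (le_max_left _ _) (min_le_left _ _)
    obtain ⟨x, hx, hwz⟩ := exists_abs_mul_lt_of_sq_le (A := A) (x₀ := x₀)
      (lt_min (max_lt hpq (by linarith [hx₀.2])) (max_lt (by linarith [hx₀.1]) (by linarith)))
      ⟨max_le hx₀.1 (by linarith), le_min hx₀.2 (by linarith)⟩ hε
      (fun x hx => hw x (hsub hx)) (hz.mono_set hsub)
    refine ⟨x, ⟨?_, hsub hx⟩, hwz⟩
    rw [Real.ball_eq_Ioo]
    exact Ioo_subset_Ioo (le_max_right _ _) (min_le_right _ _) hx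
  refine (hsmall.and_eventually (eventually_nhdsWithin_of_forall hFwz)).mono ?_
  rintro x ⟨hwz, hFx⟩
  rwa [hFx, add_sub_cancel_left]

theorem ACon.integral_deriv_mul_add_eq_sub_of_locAC {L x₀ : ℝ} {w z : ℝ → ℝ}
    (hx₀ : x₀ ∈ Ioo 0 L) (hw : ACon 0 L w) (hw₀ : w x₀ = 0) (hw' : MemL2I L (deriv w))
    (hz : MemL2I L z) (hzAC : LocAC L x₀ z)
    (hint : IntegrableOn (fun x => deriv w x * z x + w x * deriv z x) (Icc 0 L)) :
    ∫ x in 0..L, deriv w x * z x + w x * deriv z x = w L * z L - w 0 * z 0 := by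
  obtain ⟨h0x₀, hx₀L⟩ := hx₀
  have hL : 0 ≤ L := (h0x₀.trans hx₀L).le
  have hz2 : IntegrableOn (fun x => z x ^ 2) (Ioo 0 L) := hz.integrable_sq
  have hii : IntervalIntegrable (fun x => deriv w x * z x + w x * deriv z x) volume 0 L :=
    (intervalIntegrable_iff_integrableOn_Icc_of_le hL).mpr hint
  set F := fun t => ∫ x in 0..t, deriv w x * z x + w x * deriv z x
  have hF : ContinuousWithinAt F (Icc 0 L) x₀ := by
    refine ContinuousOn.continuousWithinAt ?_ ⟨h0x₀.le, hx₀L.le⟩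
    simpa only [uIcc_of_le hL] using
      intervalIntegral.continuousOn_primitive_interval' hii left_mem_uIcc
  have hbound : ∀ x ∈ Ioo 0 L, w x ^ 2 ≤ (∫ t in Icc 0 L, deriv w t ^ 2) * |x - x₀| :=
    fun x hx => hw.sq_le_integral_sq_mul
      ((integrableOn_Icc_iff_integrableOn_Ioo).mpr hw'.integrable_sq) ⟨h0x₀.le, hx₀L.le⟩ hw₀
      (Ioo_subset_Icc_self hx)
  have hleft : F x₀ = -(w 0 * z 0) := by
    refine (hF.mono (Ioo_subset_Icc_self.trans (Icc_subset_Icc le_rfl hx₀L.le))).eq_of_eqOn_add_mul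
      h0x₀ ⟨h0x₀.le, le_rfl⟩ (fun a ha => ?_) (fun x hx => hbound x ⟨hx.1, hx.2.trans hx₀L⟩)
      (hz2.mono_set (Ioo_subset_Ioo le_rfl hx₀L.le))
    have hzAC := hzAC.acon le_rfl ha.1.le (ha.2.trans hx₀L).le fun h => ha.2.not_ge h.2
    simp only [F, (hw.mono le_rfl ha.1.le (ha.2.trans hx₀L).le).integral_deriv_mul_add_eq_sub
      hzAC ha.1.le]
    ring
  have hright : F x₀ = F L - w L * z L := by
    refine (hF.mono (Ioo_subset_Icc_self.trans (Icc_subset_Icc h0x₀.le le_rfl))).eq_of_eqOn_add_mul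
      hx₀L ⟨le_rfl, hx₀L.le⟩ (fun b hb => ?_) (fun x hx => hbound x ⟨h0x₀.trans hx.1, hx.2⟩)
      (hz2.mono_set (Ioo_subset_Ioo h0x₀.le le_rfl))
    have h0b : 0 ≤ b := (h0x₀.trans hb.1).le
    have hzAC := hzAC.acon h0b hb.2.le le_rfl fun h => hb.1.not_ge h.1
    have hsplit := intervalIntegral.integral_interval_sub_left hii
      (hii.mono_set (uIcc_subset_uIcc_left (by rw [uIcc_of_le hL]; exact ⟨h0b, hb.2.le⟩)))
    rw [(hw.mono h0b hb.2.le le_rfl).integral_deriv_mul_add_eq_sub hzAC hb.2.le] at hsplit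
    simp only [F]
    linarith
  linarith

lemma StrongDeg.nonneg {L x₀ : ℝ} {u : ℝ → ℝ} (hu : StrongDeg L x₀ u) {x : ℝ}
    (hx : x ∈ Icc 0 L) : 0 ≤ u x := by
  rcases eq_or_ne x x₀ with rfl | hne
  · exact hu.zero.ge
  · exact (hu.pos x hx hne).le

theorem degenerate_integration_by_parts_general
    (L x₀ : ℝ) (u y z : ℝ → ℝ)
    (hu : StrongDeg L x₀ u)
    (hy : MemH2u L x₀ u y) (hz : MemH1u L x₀ u z) :
    (∫ x in Ioo 0 L, deriv (fun s => u s * deriv y s) x * z x)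
      = - ∫ x in Ioo 0 L, u x * deriv y x * deriv z x := by
  obtain ⟨⟨-, -, hyx, -, -⟩, -, hw', hwAC⟩ := hy
  obtain ⟨hz2, hzAC, hzx, hz0, hzL⟩ := hz
  have hweight : EqOn (fun x => Real.sqrt (u x) * deriv y x * (Real.sqrt (u x) * deriv z x))
      (fun x => u x * deriv y x * deriv z x) (Ioo 0 L) := fun x hx => by
    dsimp only
    rw [mul_mul_mul_comm, Real.mul_self_sqrt (hu.nonneg (Ioo_subset_Icc_self hx)), mul_assoc]
  have h1 : IntegrableOn (fun x => deriv (fun s => u s * deriv y s) x * z x) (Ioo 0 L) :=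
    hw'.integrable_mul hz2
  have h2 : IntegrableOn (fun x => u x * deriv y x * deriv z x) (Ioo 0 L) :=
    IntegrableOn.congr_fun (hyx.integrable_mul hzx) hweight measurableSet_Ioo
  have hibp := hwAC.integral_deriv_mul_add_eq_sub_of_locAC hu.mem (by simp [hu.zero]) hw' hz2
    hzAC ((integrableOn_Icc_iff_integrableOn_Ioo).mpr (h1.add h2))
  rw [hz0, hzL, mul_zero, mul_zero, sub_zero, intervalIntegral.integral_of_le
    (hu.mem.1.trans hu.mem.2).le, integral_Ioc_eq_integral_Ioo, integral_add h1 h2] at hibp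
  linarith

/-- Lemma 2.2: integration by parts for the strongly degenerate
operator: for `(y,z) ∈ H_u^2(0,L) × H_u^1(0,L)`,
`∫_0^L (u y_x)_x z dx = − ∫_0^L u y_x z_x dx`. -/
theorem degenerate_integration_by_parts
    (L x₀ : ℝ) (hL : 0 < L) (u y z : ℝ → ℝ)
    (hu : StrongDeg L x₀ u)
    (hy : MemH2u L x₀ u y) (hz : MemH1u L x₀ u z) :
    (∫ x in Ioo 0 L, deriv (fun s => u s * deriv y s) x * z x)
      = - ∫ x in Ioo 0 L, u x * deriv y x * deriv z x :=
  degenerate_integration_by_parts_general L x₀ u y z hu hy hz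
end

section
/- Let L > 0, u_∞ ≥ 0, u₀, u_L ∈ ℝ, and u_M ∈ W^{1,∞}(0,L) with ‖u_M'‖_{L^∞(0,L)} ≤ u_∞, u₀ ≤ u_M(0), u_L ≤ u_M(L). Define u*(x) = u₀ + u_∞ x on [0,x₁), u*(x) = u_M(x) on [x₁,x₂), u*(x) = −u_∞(x−L) + u_L on [x₂,L], where x₁ ≤ x₂ solve u_M(x₁) = u_∞ x₁ + u₀ and u_M(x₂) = −u_∞(x₂−L) + u_L. Then for every z ∈ W^{1,∞}(0,L) with |z'(x)| ≤ u_∞ a.e. on (0,L), z(0) ≤ u₀, z(L) ≤ u_L, and z(x) ≤ u_M(x) for all x ∈ [0,L], one has z(x) ≤ u*(x) for all x ∈ [0,L]; that is, u* is the maximal element of this constraint set, and belongs to it. -/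
open MeasureTheory Set Filter

/-
Since `u_M` is `u_∞`-Lipschitz and meets the cone `u₀ + u_∞ x` at `x₁`, it lies above that cone
on `[0,x₁]` and below it beyond; symmetrically for the cone `u_L − u_∞ (x − L)` at `x₂`, and the
two cones cross between `x₁` and `x₂`. Hence on `[0,L]`, `u*` is the minimum of the two cones and
`u_M`. Each admissible `z` lies below all three (below the cones by the Lipschitz bound from the
endpoints), and a minimum of `u_∞`-Lipschitz functions is `u_∞`-Lipschitz.
-/

theorem LipschitzOnWith.min {α : Type*} [PseudoEMetricSpace α] {f g : α → ℝ} {Kf Kg : NNReal}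
    {s : Set α} (hf : LipschitzOnWith Kf f s) (hg : LipschitzOnWith Kg g s) :
    LipschitzOnWith (max Kf Kg) (fun x => min (f x) (g x)) s :=
  lipschitzOnWith_iff_restrict.2 (hf.to_restrict.min hg.to_restrict)

theorem LipschitzOnWith.congr {α β : Type*} [PseudoEMetricSpace α] [PseudoEMetricSpace β]
    {f g : α → β} {K : NNReal} {s : Set α} (hf : LipschitzOnWith K f s) (h : EqOn f g s) :
    LipschitzOnWith K g s := fun x hx y hy => by
  rw [← h hx, ← h hy]
  exact hf hx hy

theorem LipschitzOnWith.le_add_mul_abs_sub {f : ℝ → ℝ} {s : Set ℝ} {K : ℝ} (hK : 0 ≤ K)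
    (hf : LipschitzOnWith K.toNNReal f s) {x y : ℝ} (hx : x ∈ s) (hy : y ∈ s) :
    f x ≤ f y + K * |x - y| := by
  simpa only [Real.coe_toNNReal _ hK, Real.dist_eq] using hf.le_add_mul hx hy

theorem LipschitzOnWith.abs_sub_le_mul_sub {f : ℝ → ℝ} {s : Set ℝ} {K : ℝ} (hK : 0 ≤ K)
    (hf : LipschitzOnWith K.toNNReal f s) {a b : ℝ} (ha : a ∈ s) (hb : b ∈ s) (hab : a ≤ b) :
    |f b - f a| ≤ K * (b - a) := by
  simpa only [Real.coe_toNNReal _ hK, Real.dist_eq, abs_of_nonneg (sub_nonneg.2 hab)]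
    using hf.dist_le_mul b hb a ha

theorem piecewise_eq_min_cones_obstacle {L uinf u0 uL x₁ x₂ x : ℝ} {uM : ℝ → ℝ}
    (hinf : 0 ≤ uinf) (huM : LipschitzOnWith uinf.toNNReal uM (Icc 0 L))
    (hx₁ : x₁ ∈ Icc 0 L) (hx₂ : x₂ ∈ Icc 0 L) (hx12 : x₁ ≤ x₂)
    (heq1 : uM x₁ = uinf * x₁ + u0) (heq2 : uM x₂ = -uinf * (x₂ - L) + uL)
    (hx : x ∈ Icc 0 L) :
    (if x < x₁ then u0 + uinf * x else if x < x₂ then uM x else -uinf * (x - L) + uL) =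
      min (min (u0 + uinf * x) (uM x)) (-uinf * (x - L) + uL) := by
  have h₁₂ := abs_le.1 (huM.abs_sub_le_mul_sub hinf hx₁ hx₂ hx12)
  split_ifs with h₁ h₂
  · have h := abs_le.1 (huM.abs_sub_le_mul_sub hinf hx hx₁ h₁.le)
    have hmono := mul_le_mul_of_nonneg_left h₁.le hinf
    rw [min_eq_left (b := uM x) (by linarith), min_eq_left (by linarith)]
  · have h := abs_le.1 (huM.abs_sub_le_mul_sub hinf hx₁ hx (not_lt.1 h₁))
    have h' := abs_le.1 (huM.abs_sub_le_mul_sub hinf hx hx₂ h₂.le)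
    rw [min_eq_right (a := u0 + uinf * x) (by linarith), min_eq_left (by linarith)]
  · have h := abs_le.1 (huM.abs_sub_le_mul_sub hinf hx₂ hx (not_lt.1 h₂))
    have hmono := mul_le_mul_of_nonneg_left (not_lt.1 h₂) hinf
    rw [min_eq_right (le_min (by linarith) (by linarith))]

theorem piecewise_maximal_element_general
    (L uinf u0 uL : ℝ) (uM : ℝ → ℝ)
    (hinf : 0 ≤ uinf)
    (huM : LipschitzOnWith (Real.toNNReal uinf) uM (Icc 0 L))
    (x₁ x₂ : ℝ) (hx₁ : x₁ ∈ Icc 0 L) (hx₂ : x₂ ∈ Icc 0 L) (hx12 : x₁ ≤ x₂)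
    (heq1 : uM x₁ = uinf * x₁ + u0) (heq2 : uM x₂ = -uinf * (x₂ - L) + uL)
    (ustar : ℝ → ℝ)
    (hustar : ∀ x : ℝ, ustar x =
      if x < x₁ then u0 + uinf * x
      else if x < x₂ then uM x
      else -uinf * (x - L) + uL) :
    (LipschitzOnWith (Real.toNNReal uinf) ustar (Icc 0 L) ∧
      ustar 0 ≤ u0 ∧ ustar L ≤ uL ∧ ∀ x ∈ Icc 0 L, ustar x ≤ uM x) ∧
    ∀ z : ℝ → ℝ,
      LipschitzOnWith (Real.toNNReal uinf) z (Icc 0 L) →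
      z 0 ≤ u0 → z L ≤ uL → (∀ x ∈ Icc 0 L, z x ≤ uM x) →
      ∀ x ∈ Icc 0 L, z x ≤ ustar x := by
  have hstar : EqOn (fun x => min (min (u0 + uinf * x) (uM x)) (-uinf * (x - L) + uL))
      ustar (Icc 0 L) := fun x hx =>
    (hustar x ▸ piecewise_eq_min_cones_obstacle hinf huM hx₁ hx₂ hx12 heq1 heq2 hx).symm
  have h0_mem : (0 : ℝ) ∈ Icc 0 L := left_mem_Icc.2 (hx₁.1.trans hx₁.2)
  have hL_mem : L ∈ Icc 0 L := right_mem_Icc.2 (hx₁.1.trans hx₁.2)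
  have hcone₀ : LipschitzWith uinf.toNNReal (fun x => u0 + uinf * x) :=
    .of_dist_le' fun x y => by simp [Real.dist_eq, ← mul_sub, abs_mul, abs_of_nonneg hinf]
  have hconeL : LipschitzWith uinf.toNNReal (fun x => -uinf * (x - L) + uL) :=
    .of_dist_le' fun x y => by simp [Real.dist_eq, ← mul_sub, abs_mul, abs_of_nonneg hinf]
  refine ⟨⟨?_, ?_, ?_, fun x hx => ?_⟩, fun z hz hz0 hzL hzM x hx => ?_⟩
  · simpa only [max_self] using
      ((hcone₀.lipschitzOnWith.min huM).min hconeL.lipschitzOnWith).congr hstar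
  · rw [← hstar h0_mem]
    simp
  · rw [← hstar hL_mem]
    simp
  · rw [← hstar hx]
    exact (min_le_left _ _).trans (min_le_right _ _)
  · rw [← hstar hx]
    have hbound₀ := hz.le_add_mul_abs_sub hinf hx h0_mem
    have hboundL := hz.le_add_mul_abs_sub hinf hx hL_mem
    rw [sub_zero, abs_of_nonneg hx.1] at hbound₀
    rw [abs_of_nonpos (sub_nonpos.2 hx.2)] at hboundL
    exact le_min (le_min (by linarith) (hzM x hx)) (by linarith)

/-- the piecewise function `u*` (`u₀ + u_∞ x` on `[0,x₁)`, `u_M` on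
`[x₁,x₂)`, `−u_∞(x−L)+u_L` on `[x₂,L]`) is the maximal element of the constraint set
`{z ∈ W^{1,∞}(0,L) : |z'| ≤ u_∞ a.e., z(0) ≤ u₀, z(L) ≤ u_L, z ≤ u_M on [0,L]}`,
and it belongs to this set. -/
theorem piecewise_maximal_element
    (L uinf u0 uL : ℝ) (uM : ℝ → ℝ)
    (hL : 0 < L) (hinf : 0 ≤ uinf)
    (huM : LipschitzOnWith (Real.toNNReal uinf) uM (Icc 0 L))
    (hu0 : u0 ≤ uM 0) (huL : uL ≤ uM L)
    (x₁ x₂ : ℝ) (hx₁ : x₁ ∈ Icc 0 L) (hx₂ : x₂ ∈ Icc 0 L) (hx12 : x₁ ≤ x₂)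
    (heq1 : uM x₁ = uinf * x₁ + u0) (heq2 : uM x₂ = -uinf * (x₂ - L) + uL)
    (ustar : ℝ → ℝ)
    (hustar : ∀ x : ℝ, ustar x =
      if x < x₁ then u0 + uinf * x
      else if x < x₂ then uM x
      else -uinf * (x - L) + uL) :
    (LipschitzOnWith (Real.toNNReal uinf) ustar (Icc 0 L) ∧
      ustar 0 ≤ u0 ∧ ustar L ≤ uL ∧ ∀ x ∈ Icc 0 L, ustar x ≤ uM x) ∧
    ∀ z : ℝ → ℝ,
      LipschitzOnWith (Real.toNNReal uinf) z (Icc 0 L) →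
      z 0 ≤ u0 → z L ≤ uL → (∀ x ∈ Icc 0 L, z x ≤ uM x) →
      ∀ x ∈ Icc 0 L, z x ≤ ustar x :=
  piecewise_maximal_element_general L uinf u0 uL uM hinf huM x₁ x₂ hx₁ hx₂ hx12 heq1 heq2 ustar
    hustar
end
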